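/- For A > 0 define f_A : (0,1) → ℝ by f_A(x) := e^{−A/x} + e^{−A/(1−x)}. Then sup_{0<x<1} f_A(x) = max(e^{−A}, 2·e^{−2A}). -/
import Mathlib

open Real Set Filter

-- B': for 0 < s ≤ t ≤ 1, 1 ≤ s + t, s log s ≤ t log t
lemma lemB' {s t : ℝ} (hs : 0 < s) (hst : s ≤ t) (ht1 : t ≤ 1) (hsum : 1 ≤ s + t) :
    s * Real.log s ≤ t * Real.log t := by
  have ht : 0 < t := lt_of_lt_of_le hs hst
  have h1 : Real.log (1/t) ≤ 1/t - 1 := Real.log_le_sub_one_of_pos (by positivity)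
  have h2 : Real.log (s/t) ≤ s/t - 1 := Real.log_le_sub_one_of_pos (by positivity)
  rw [Real.log_div one_ne_zero (ne_of_gt ht), Real.log_one] at h1
  rw [Real.log_div (ne_of_gt hs) (ne_of_gt ht)] at h2
  -- log t ≥ 1 - 1/t ; log t - log s ≥ 1 - s/t
  have key : t * Real.log t - s * Real.log s
      = (t - s) * Real.log t + s * (Real.log t - Real.log s) := by ring
  have e1 : (t - s) * Real.log t ≥ (t - s) * (1 - 1/t) :=
    mul_le_mul_of_nonneg_left (by linarith) (by linarith)
  have e2 : s * (Real.log t - Real.log s) ≥ s * (1 - s/t) :=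
    mul_le_mul_of_nonneg_left (by linarith) (le_of_lt hs)
  have e3 : (t - s) * (1 - 1/t) + s * (1 - s/t) = (t - s) * (t - 1 + s) / t := by
    field_simp
  have e4 : 0 ≤ (t - s) * (t - 1 + s) / t := by
    apply div_nonneg _ (le_of_lt ht)
    apply mul_nonneg <;> linarith
  linarith

lemma lemE_aux {c p : ℝ} (hc1 : 1 ≤ c) (hp0 : 0 < p) (hcp1 : c - p < 1)
    (hp : p ≤ c / 2) :
    Real.log p * Real.log (c - p) ≤ Real.log (c/2) ^ 2 := by
  have hc0 : 0 < c := by linarith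
  rcases eq_or_lt_of_le hp with heq | hlt
  · rw [heq]
    have : c - c/2 = c/2 := by ring
    rw [this, sq]
  · -- monotone on Icc p (c/2)
    set H : ℝ → ℝ := fun x => Real.log x * Real.log (c - x) with hH
    have hderiv : ∀ x ∈ Set.Ioo p (c/2),
        HasDerivAt H (x⁻¹ * Real.log (c - x) + Real.log x * ((c - x)⁻¹ * -1)) x := by
      intro x hx
      have hx0 : x ≠ 0 := ne_of_gt (lt_trans hp0 hx.1)
      have hcx0 : c - x ≠ 0 := by
        have : x < c := by nlinarith [hx.2]
        exact ne_of_gt (by linarith)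
      exact (Real.hasDerivAt_log hx0).mul
        (((Real.hasDerivAt_log hcx0).comp x ((hasDerivAt_id x).const_sub c)))
    have hmono : MonotoneOn H (Set.Icc p (c/2)) := by
      apply monotoneOn_of_deriv_nonneg (convex_Icc _ _)
      · apply ContinuousOn.mul
        · exact Real.continuousOn_log.comp continuousOn_id
            (fun x hx => by simp; exact ne_of_gt (lt_of_lt_of_le hp0 hx.1))
        · apply ContinuousOn.log
          · exact (continuous_const.sub continuous_id).continuousOn
          · intro x hx
            have : x < c := by rcases hx with ⟨h1, h2⟩; nlinarith
            exact ne_of_gt (by linarith)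
      · rw [interior_Icc]
        exact fun x hx => (hderiv x hx).differentiableAt.differentiableWithinAt
      · rw [interior_Icc]
        intro x hx
        obtain ⟨hxa, hxb⟩ := hx
        rw [(hderiv x ⟨hxa, hxb⟩).deriv]
        have hx0 : 0 < x := lt_trans hp0 hxa
        have hcx0 : 0 < c - x := by nlinarith
        have hB : x * Real.log x ≤ (c - x) * Real.log (c - x) := by
          apply lemB' hx0 (by linarith) (by linarith) (by linarith)
        have expand : x⁻¹ * Real.log (c - x) + Real.log x * ((c - x)⁻¹ * -1)
            = ((c - x) * Real.log (c - x) - x * Real.log x) / (x * (c - x)) := by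
          field_simp; ring
        rw [expand]
        apply div_nonneg (by linarith) (by positivity)
    have := hmono (Set.mem_Icc.2 ⟨le_refl p, le_of_lt hlt⟩)
      (Set.mem_Icc.2 ⟨le_of_lt hlt, le_refl _⟩) (le_of_lt hlt)
    simp only [hH] at this
    have hval : c - c/2 = c/2 := by ring
    rw [hval, ← sq] at this
    exact this

lemma lemE {c p : ℝ} (hc1 : 1 ≤ c) (hp0 : 0 < p) (hp1 : p < 1)
    (hcp0 : 0 < c - p) (hcp1 : c - p < 1) :
    Real.log p * Real.log (c - p) ≤ Real.log (c/2) ^ 2 := by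
  rcases le_total p (c/2) with h | h
  · exact lemE_aux hc1 hp0 hcp1 h
  · have h2 := lemE_aux hc1 (p := c - p) hcp0 (by linarith) (by linarith)
    have h3 : c - (c - p) = p := by ring
    rw [h3, mul_comm] at h2
    exact h2

lemma lemD {c p q : ℝ} (hc1 : 1 ≤ c) (hp : p ∈ Set.Ioo (0:ℝ) 1)
    (hq : q ∈ Set.Ioo (0:ℝ) 1)
    (h : Real.log (c/2) ^ 2 ≤ Real.log p * Real.log q) : p + q ≤ c := by
  obtain ⟨hp0, hp1⟩ := hp
  obtain ⟨hq0, hq1⟩ := hq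
  rcases le_or_gt 1 (c - p) with hcp | hcp
  · linarith
  · have hcp0 : 0 < c - p := by linarith
    have hlp : Real.log p < 0 := Real.log_neg hp0 hp1
    have hE := lemE hc1 hp0 hp1 hcp0 hcp
    -- log p * log q ≥ log p * log (c - p), divide by log p < 0
    have h2 : Real.log p * Real.log (c - p) ≤ Real.log p * Real.log q := le_trans hE h
    have h3 : Real.log q ≤ Real.log (c - p) := by
      by_contra hcon
      push_neg at hcon
      have := mul_lt_mul_of_neg_left hcon hlp
      linarith
    have : q ≤ c - p := by
      calc q = Real.exp (Real.log q) := (Real.exp_log hq0).symm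
      _ ≤ Real.exp (Real.log (c - p)) := Real.exp_le_exp.2 h3
      _ = c - p := Real.exp_log hcp0
    linarith

lemma lemC {B u : ℝ} (hB : 0 < B) (hu : 0 < u) :
    Real.exp (-(B*u)) + Real.exp (-(B/u)) ≤ max 1 (2 * Real.exp (-B)) := by
  have he1 : Real.exp (-B) < 1 := Real.exp_lt_one_iff.2 (by linarith)
  set c := max 1 (2 * Real.exp (-B)) with hc
  have hc1 : 1 ≤ c := le_max_left _ _
  have hp : Real.exp (-(B*u)) ∈ Set.Ioo (0:ℝ) 1 :=
    ⟨Real.exp_pos _, Real.exp_lt_one_iff.2 (by nlinarith)⟩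
  have hq : Real.exp (-(B/u)) ∈ Set.Ioo (0:ℝ) 1 := by
    refine ⟨Real.exp_pos _, Real.exp_lt_one_iff.2 ?_⟩
    have : 0 < B / u := by positivity
    linarith
  have hprod : Real.log (c/2) ^ 2 ≤ Real.log (Real.exp (-(B*u))) * Real.log (Real.exp (-(B/u))) := by
    rw [Real.log_exp, Real.log_exp]
    have hval : -(B*u) * -(B/u) = B^2 := by
      field_simp
    rw [hval]
    rcases max_cases 1 (2 * Real.exp (-B)) with ⟨hm, hm2⟩ | ⟨hm, hm2⟩
    · -- c = 1, so exp(-B) ≤ 1/2, B ≥ log 2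
      rw [← hc] at hm
      rw [hm]
      have hexp : Real.exp (-B) ≤ 1/2 := by linarith
      have hB2 : Real.log 2 ≤ B := by
        have h5 : Real.log (Real.exp (-B)) ≤ Real.log (1/2) := by
          apply Real.log_le_log (Real.exp_pos _) hexp
        rw [Real.log_exp, Real.log_div one_ne_zero two_ne_zero, Real.log_one] at h5
        linarith
      have hlog : Real.log ((1:ℝ)/2) = -Real.log 2 := by
        rw [Real.log_div one_ne_zero two_ne_zero, Real.log_one]; ring
      rw [hlog]
      have hl2 : 0 < Real.log 2 := Real.log_pos (by norm_num)
      nlinarith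
    · rw [← hc] at hm
      rw [hm]
      have : 2 * Real.exp (-B) / 2 = Real.exp (-B) := by ring
      rw [this, Real.log_exp]
      nlinarith
  have := lemD hc1 hp hq hprod
  exact this

theorem sup_fA_eq_max (A : ℝ) (hA : 0 < A) :
    sSup ((fun x : ℝ => Real.exp (-A / x) + Real.exp (-A / (1 - x))) '' Set.Ioo 0 1)
      = max (Real.exp (-A)) (2 * Real.exp (-2 * A)) := by
  set f : ℝ → ℝ := fun x => Real.exp (-A / x) + Real.exp (-A / (1 - x)) with hf
  set M : ℝ := max (Real.exp (-A)) (2 * Real.exp (-2 * A)) with hM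
  have hexp2 : Real.exp (-A) * Real.exp (-A) = Real.exp (-2 * A) := by
    rw [← Real.exp_add]; ring_nf
  -- upper bound
  have hub : ∀ x ∈ Set.Ioo (0:ℝ) 1, f x ≤ M := by
    intro x hx
    obtain ⟨hx0, hx1⟩ := hx
    have hx1' : (0:ℝ) < 1 - x := by linarith
    set u : ℝ := (1 - x) / x with hu
    have hu0 : 0 < u := div_pos hx1' hx0
    have e1 : -A / x = -A + -(A * u) := by
      rw [hu]; field_simp; ring
    have e2 : -A / (1 - x) = -A + -(A / u) := by
      rw [hu, div_div_eq_mul_div]; field_simp; ring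
    have hC := lemC hA hu0
    have expand : f x = Real.exp (-A) * (Real.exp (-(A*u)) + Real.exp (-(A/u))) := by
      rw [hf]
      simp only
      rw [e1, e2, Real.exp_add, Real.exp_add]
      ring
    rw [expand]
    calc Real.exp (-A) * (Real.exp (-(A*u)) + Real.exp (-(A/u)))
        ≤ Real.exp (-A) * max 1 (2 * Real.exp (-A)) :=
          mul_le_mul_of_nonneg_left hC (le_of_lt (Real.exp_pos _))
      _ = M := by
          rw [mul_max_of_nonneg _ _ (le_of_lt (Real.exp_pos (-A)))]
          rw [mul_one, hM]
          congr 1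
          rw [show Real.exp (-A) * (2 * Real.exp (-A)) = 2 * (Real.exp (-A) * Real.exp (-A)) by ring, hexp2]
  have hne : (2 * Real.exp (-2 * A)) ∈ f '' Set.Ioo 0 1 := by
    refine ⟨1/2, by norm_num, ?_⟩
    rw [hf]
    simp only
    rw [show (1:ℝ) - 1/2 = 1/2 by norm_num, show -A / (1/2:ℝ) = -2 * A by ring]
    ring
  have hbdd : BddAbove (f '' Set.Ioo 0 1) := by
    refine ⟨M, ?_⟩
    rintro y ⟨x, hx, rfl⟩
    exact hub x hx
  apply le_antisymm
  · apply Real.sSup_le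
    · rintro y ⟨x, hx, rfl⟩
      exact hub x hx
    · rw [hM]; positivity
  · apply max_le
    · -- exp(-A) ≤ sSup via limit as x → 0+
      have h1 : Tendsto (fun x : ℝ => Real.exp (-A / x)) (nhdsWithin 0 (Set.Ioi 0)) (nhds 0) := by
        have ha : Tendsto (fun x : ℝ => A / x) (nhdsWithin 0 (Set.Ioi 0)) atTop := by
          simpa [div_eq_mul_inv] using Filter.Tendsto.const_mul_atTop hA tendsto_inv_nhdsGT_zero
        have hb : Tendsto (fun x : ℝ => -(A / x)) (nhdsWithin 0 (Set.Ioi 0)) atBot :=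
          tendsto_neg_atTop_atBot.comp ha
        have hcmp := Real.tendsto_exp_atBot.comp hb
        have heq : (fun x : ℝ => Real.exp (-A / x)) = (Real.exp ∘ fun x : ℝ => -(A / x)) := by
          funext x; simp [Function.comp, neg_div]
        rw [heq]; exact hcmp
      have h2 : Tendsto (fun x : ℝ => Real.exp (-A / (1 - x))) (nhdsWithin 0 (Set.Ioi 0))
          (nhds (Real.exp (-A))) := by
        have hc : ContinuousAt (fun x : ℝ => Real.exp (-A / (1 - x))) 0 := by
          apply Real.continuous_exp.continuousAt.comp
          apply ContinuousAt.div continuousAt_const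
          · exact (continuous_const.sub continuous_id).continuousAt
          · norm_num
        have ht : Tendsto (fun x : ℝ => Real.exp (-A / (1 - x))) (nhdsWithin 0 (Set.Ioi 0))
            (nhds (Real.exp (-A / (1 - 0)))) :=
          hc.tendsto.mono_left nhdsWithin_le_nhds
        simpa using ht
      have h3 : Tendsto f (nhdsWithin 0 (Set.Ioi 0)) (nhds (Real.exp (-A))) := by
        have := h1.add h2
        rw [zero_add] at this
        exact this
      apply le_of_tendsto h3
      have hmem : Set.Ioo (0:ℝ) 1 ∈ nhdsWithin 0 (Set.Ioi (0:ℝ)) := by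
        apply Ioo_mem_nhdsGT_of_mem
        constructor <;> norm_num
      filter_upwards [hmem] with x hx
      exact le_csSup hbdd ⟨x, hx, rfl⟩
    · exact le_csSup hbdd hne
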